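/- arXiv:2605.00190 — 2 statements merged into one kernel-verified Lean document; each statement's English description precedes it below -/
import Mathlib

section
/- For every T ∈ ITM(r) and every ε > 0 there exist maps T₁, T₂ ∈ ITM(r) at distance less than ε from T such that every point of I is eventually periodic under T₁ while T₂ has no periodic points at all. Consequently, no map in ITM(r) is structurally stable or Ω-stable: no neighbourhood of T in ITM(r) consists of maps that are pairwise topologically conjugate, nor of maps that are pairwise topologically conjugate on their non-wandering sets. -/
open Set Filter
open scoped Classical

/-- An interval translation map on `r ≥ 2` intervals: discontinuity points
`0 = β₀ < β₁ < ⋯ < β_{r−1} < β_r = 1` and translation parameters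
`γ_i ∈ [−β_{i−1}, 1−β_i]`, acting by `T(x) = x + γ_i` for `x ∈ [β_{i−1}, β_i)`. -/
structure ITM (r : ℕ) : Type where
  beta : Fin (r + 1) → ℝ
  gamma : Fin r → ℝ
  two_le_r : 2 ≤ r
  beta_zero : beta 0 = 0
  beta_last : beta (Fin.last r) = 1
  beta_mono : StrictMono beta
  gamma_mem : ∀ i : Fin r, gamma i ∈ Set.Icc (-(beta i.castSucc)) (1 - beta i.succ)

namespace ITM

variable {r : ℕ}

/-- The unit interval `I = [0,1)`. -/
def unitIco : Set ℝ := Set.Ico 0 1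

/-- Index of the partition interval `I_i = [β_{i−1}, β_i)` containing `x`. -/
noncomputable def idx (T : ITM r) (x : ℝ) : Fin r :=
  if h : ∃ i : Fin r, x ∈ Set.Ico (T.beta i.castSucc) (T.beta i.succ) then h.choose
  else ⟨0, by have := T.two_le_r; omega⟩

/-- The interval translation map itself (right-continuous version), extended by the
identity off `[0,1)`. -/
noncomputable def f (T : ITM r) (x : ℝ) : ℝ :=
  if x ∈ unitIco then x + T.gamma (T.idx x) else x

/-- Index of the partition interval `(β_{i−1}, β_i]` containing `x` (left-limit version). -/
noncomputable def idxm (T : ITM r) (x : ℝ) : Fin r :=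
  if h : ∃ i : Fin r, x ∈ Set.Ioc (T.beta i.castSucc) (T.beta i.succ) then h.choose
  else ⟨0, by have := T.two_le_r; omega⟩

/-- The left-limit version of `T`: `T(x⁻) = lim_{t↑x} T(t)`. -/
noncomputable def fm (T : ITM r) (x : ℝ) : ℝ :=
  if x ∈ Set.Ioc (0 : ℝ) 1 then x + T.gamma (T.idxm x) else x

/-- Dynamics on signed points: `(x, true)` represents `x⁺` and `(x, false)` represents `x⁻`. -/
noncomputable def sf (T : ITM r) (p : ℝ × Bool) : ℝ × Bool :=
  if p.2 then (T.f p.1, true) else (T.fm p.1, false)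

/-- `X_n = T^n(I)`. -/
noncomputable def Xn (T : ITM r) (n : ℕ) : Set ℝ := (T.f)^[n] '' unitIco

/-- The attractor `X = ⋂_{n≥0} X_n`. -/
noncomputable def X (T : ITM r) : Set ℝ := ⋂ n : ℕ, T.Xn n

/-- The closure `X̄` of the attractor in `[0,1]` (equivalently, in `ℝ`). -/
noncomputable def Xbar (T : ITM r) : Set ℝ := closure T.X

/-- `T` is of finite type if `X_{n+1} = X_n` for some `n`. -/
def FiniteType (T : ITM r) : Prop := ∃ n : ℕ, T.Xn (n + 1) = T.Xn n

/-- The set of (unsigned) discontinuities `{β₁, …, β_{r−1}}` of `T`. -/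
def critSet (T : ITM r) : Set ℝ :=
  {b : ℝ | ∃ i : Fin (r + 1), i ≠ 0 ∧ i ≠ Fin.last r ∧ b = T.beta i}

/-- The signed critical set `𝒞 = {β₁⁻, β₁⁺, …, β_{r−1}⁻, β_{r−1}⁺}`. -/
def signedCrit (T : ITM r) : Set (ℝ × Bool) := {p : ℝ × Bool | p.1 ∈ T.critSet}

/-- `x` lands on a discontinuity of `T`: some forward iterate (`k ≥ 0`) is a discontinuity. -/
def landsOnCrit (T : ITM r) (x : ℝ) : Prop := ∃ k : ℕ, (T.f)^[k] x ∈ T.critSet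

/-- The first return time of `x` to the set `J` (by convention `0` if `x` never returns). -/
noncomputable def returnTime (T : ITM r) (J : Set ℝ) (x : ℝ) : ℕ :=
  sInf {k : ℕ | 0 < k ∧ (T.f)^[k] x ∈ J}

/-- The first return map `R_J`. -/
noncomputable def returnMap (T : ITM r) (J : Set ℝ) (x : ℝ) : ℝ :=
  (T.f)^[T.returnTime J x] x

/-- `J` is an interval component of `X`: a connected component of `X` which is a
(nondegenerate, half-open) interval `[x,y)`. -/
def IsIntervalComponent (T : ITM r) (J : Set ℝ) : Prop :=
  (∃ z ∈ T.X, J = connectedComponentIn T.X z) ∧ ∃ x y : ℝ, x < y ∧ J = Set.Ico x y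

/-- A dynamically trivial interval component: no point of its interior lands on a
discontinuity and the first return map is the identity. -/
def DynTrivial (T : ITM r) (J : Set ℝ) : Prop :=
  T.IsIntervalComponent J ∧ (∀ a ∈ interior J, ¬ T.landsOnCrit a) ∧
    ∀ z ∈ J, T.returnMap J z = z

/-- Signed membership in `[x,y)`: `+`-points of `[x,y)` and `−`-points of `(x,y]`. -/
def smem (x y : ℝ) (p : ℝ × Bool) : Prop :=
  if p.2 then p.1 ∈ Set.Ico x y else p.1 ∈ Set.Ioc x y

/-- First return time of a signed point to the interval `[x,y)`. -/
noncomputable def sReturnTime (T : ITM r) (x y : ℝ) (p : ℝ × Bool) : ℕ :=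
  sInf {k : ℕ | 0 < k ∧ smem x y ((T.sf)^[k] p)}

/-- Condition A1: for every interval component `J` of `X` and every `a ∈ J`, the orbit of
`a` up to (and not including) its return time to `J` contains at most one critical point. -/
def A1 (T : ITM r) : Prop :=
  ∀ J : Set ℝ, T.IsIntervalComponent J → ∀ a ∈ J,
    Set.Subsingleton {c : ℝ | c ∈ T.critSet ∧ ∃ k < T.returnTime J a, (T.f)^[k] a = c}

/-- Condition A2: for every dynamically non-trivial interval component `[x,y)`, neither
(signed) boundary point `x⁺`, `y⁻` lands on a discontinuity up to (and not including)
its return time. -/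
def A2 (T : ITM r) : Prop :=
  ∀ x y : ℝ, T.IsIntervalComponent (Set.Ico x y) → ¬ T.DynTrivial (Set.Ico x y) →
    (∀ k < T.sReturnTime x y (x, true), (T.sf)^[k] (x, true) ∉ T.signedCrit) ∧
    (∀ k < T.sReturnTime x y (y, false), (T.sf)^[k] (y, false) ∉ T.signedCrit)

/-- `c'` is a ghost preimage of `c`: a signed discontinuity of opposite sign whose
(signed) orbit lands on the point of `c` with the sign of `c'`. -/
def GhostPre (T : ITM r) (c' c : ℝ × Bool) : Prop :=
  c ∈ T.signedCrit ∧ c' ∈ T.signedCrit ∧ c'.2 = !c.2 ∧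
    ∃ k : ℕ, (T.sf)^[k] c' = (c.1, c'.2)

/-- A descending chain of length `n` in a ghost tree: `c (i+1)` is a ghost preimage of `c i`. -/
def GhostChain (T : ITM r) (n : ℕ) (c : ℕ → ℝ × Bool) : Prop :=
  ∀ i < n, T.GhostPre (c (i + 1)) (c i)

/-- `b` occurs as a vertex of positive level in its own ghost tree `GT(b)`. -/
def SelfGhost (T : ITM r) (b : ℝ × Bool) : Prop :=
  ∃ n : ℕ, 0 < n ∧ ∃ c : ℕ → ℝ × Bool, c 0 = b ∧ c n = b ∧ T.GhostChain n c

/-- Condition A3: no discontinuity `β ∉ X` occurs in its own ghost tree at positive level. -/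
def A3 (T : ITM r) : Prop := ∀ b ∈ T.signedCrit, b.1 ∉ T.X → ¬ T.SelfGhost b

/-- The Absence of Critical Connections condition. -/
def ACC (T : ITM r) : Prop := T.A1 ∧ T.A2 ∧ T.A3

/-- The Matching condition: for every dynamically non-trivial interval component `J` of
`X`, exactly one point of the interior of `J` lands on a critical point before returning. -/
def Matching (T : ITM r) : Prop :=
  ∀ J : Set ℝ, T.IsIntervalComponent J → ¬ T.DynTrivial J →
    ∃! a : ℝ, a ∈ interior J ∧ ∃ k < T.returnTime J a, (T.f)^[k] a ∈ T.critSet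

/-- Distance between two maps in the parameter space `ITM(r)`. -/
noncomputable def pdist (T S : ITM r) : ℝ := dist T.gamma S.gamma ⊔ dist T.beta S.beta

/-- The number of discontinuities of `T` contained in `I ∖ X̄`. -/
noncomputable def ncritOutside (T : ITM r) : ℕ := (T.critSet \ T.Xbar).ncard

/-- `T` is stable: on some neighbourhood `𝒰` of `T` in `ITM(r)`, the assignment
`T̃ ↦ X̄(T̃)` is continuous in the Hausdorff topology, all `X̄(T̃)` are homeomorphic to
`X̄(T)`, and the number of discontinuities in `I ∖ X̄(T̃)` is constant. -/
def Stable (T : ITM r) : Prop :=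
  ∃ δ : ℝ, 0 < δ ∧
    (∀ S : ITM r, pdist S T < δ → Nonempty (S.Xbar ≃ₜ T.Xbar)) ∧
    (∀ S : ITM r, pdist S T < δ → ∀ ε : ℝ, 0 < ε → ∃ η : ℝ, 0 < η ∧
      ∀ S' : ITM r, pdist S' T < δ → pdist S' S < η →
        Metric.hausdorffDist S'.Xbar S.Xbar < ε) ∧
    (∀ S : ITM r, pdist S T < δ → S.ncritOutside = T.ncritOutside)

/-- The non-wandering set `Ω(T)` (neighbourhoods taken inside `I = [0,1)`). -/
def nonwandering (T : ITM r) : Set ℝ :=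
  {x : ℝ | x ∈ unitIco ∧ ∀ U : Set ℝ, IsOpen U → x ∈ U →
    ∃ n : ℕ, 0 < n ∧ ((T.f)^[n] '' (U ∩ unitIco) ∩ (U ∩ unitIco)).Nonempty}

/-- `S` and `S'` are topologically conjugate on the sets `A`, `B`: there is a
homeomorphism `h : A → B` with `h ∘ S = S' ∘ h` on `A`. -/
def TopConjOn (S S' : ITM r) (A B : Set ℝ) : Prop :=
  ∃ h g : ℝ → ℝ, Set.BijOn h A B ∧ ContinuousOn h A ∧ Set.InvOn g h A B ∧
    ContinuousOn g B ∧ ∀ x ∈ A, h (S.f x) = S'.f (h x)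

/-- No point of the interior of `K` lands on a discontinuity before its return time to `J`. -/
def NoCritBeforeReturnOn (T : ITM r) (J K : Set ℝ) : Prop :=
  ∀ z ∈ interior K, ∀ k < T.returnTime J z, (T.f)^[k] z ∉ T.critSet

/-- `K` is a continuity interval of the first return map `R_J`: a maximal half-open
subinterval of `J` no interior point of which lands on a discontinuity before returning. -/
def IsContinuityInterval (T : ITM r) (J K : Set ℝ) : Prop :=
  (∃ u v : ℝ, u < v ∧ K = Set.Ico u v) ∧ K ⊆ J ∧ T.NoCritBeforeReturnOn J K ∧
    ∀ K' : Set ℝ, (∃ u v : ℝ, u < v ∧ K' = Set.Ico u v) → K ⊆ K' → K' ⊆ J →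
      T.NoCritBeforeReturnOn J K' → K' = K

/-- The itinerary symbol of a signed point. -/
noncomputable def sidx (T : ITM r) (p : ℝ × Bool) : Fin r :=
  if p.2 then T.idx p.1 else T.idxm p.1

/-- The forward orbit of `x` accumulates on `c` from the left. -/
def accumFromLeft (T : ITM r) (x c : ℝ) : Prop :=
  ∃ n : ℕ → ℕ, StrictMono n ∧ StrictMono (fun k => (T.f)^[n k] x) ∧
    Filter.Tendsto (fun k => (T.f)^[n k] x) Filter.atTop (nhds c)

/-- The forward orbit of `x` accumulates on `c` from the right. -/
def accumFromRight (T : ITM r) (x c : ℝ) : Prop :=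
  ∃ n : ℕ → ℕ, StrictMono n ∧ StrictAnti (fun k => (T.f)^[n k] x) ∧
    Filter.Tendsto (fun k => (T.f)^[n k] x) Filter.atTop (nhds c)

/-! ### Auxiliary lemmas -/

lemma exists_idx (T : ITM r) {x : ℝ} (hx : x ∈ unitIco) :
    ∃ i : Fin r, x ∈ Set.Ico (T.beta i.castSucc) (T.beta i.succ) := by
  obtain ⟨hx0, hx1⟩ := hx
  set s : Finset (Fin (r + 1)) := Finset.univ.filter (fun j => T.beta j ≤ x) with hs
  have h0 : (0 : Fin (r + 1)) ∈ s := by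
    simp only [hs, Finset.mem_filter, Finset.mem_univ, true_and, T.beta_zero]
    exact hx0
  have hsne : s.Nonempty := ⟨0, h0⟩
  set j := s.max' hsne with hj
  have hjs : j ∈ s := s.max'_mem hsne
  have hjle : T.beta j ≤ x := by
    simpa only [hs, Finset.mem_filter, Finset.mem_univ, true_and] using hjs
  have hjne : j ≠ Fin.last r := by
    intro h
    rw [h, T.beta_last] at hjle; linarith
  refine ⟨j.castPred hjne, ?_, ?_⟩
  · rw [Fin.castSucc_castPred]; exact hjle
  · by_contra hlt
    push_neg at hlt
    have hmem : (j.castPred hjne).succ ∈ s := by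
      simp only [hs, Finset.mem_filter, Finset.mem_univ, true_and]
      exact hlt
    have hle := s.le_max' _ hmem
    rw [← hj] at hle
    have hlt2 : j < (j.castPred hjne).succ := by
      conv_lhs => rw [← Fin.castSucc_castPred j hjne]
      exact Fin.castSucc_lt_succ
    exact absurd hle (not_le.mpr hlt2)

lemma idx_mem (T : ITM r) {x : ℝ} (hx : x ∈ unitIco) :
    x ∈ Set.Ico (T.beta (T.idx x).castSucc) (T.beta (T.idx x).succ) := by
  have h := T.exists_idx hx
  rw [idx, dif_pos h]
  exact h.choose_spec

lemma f_apply (T : ITM r) {x : ℝ} (hx : x ∈ unitIco) :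
    T.f x = x + T.gamma (T.idx x) := by rw [f, if_pos hx]

lemma f_mem (T : ITM r) {x : ℝ} (hx : x ∈ unitIco) : T.f x ∈ unitIco := by
  obtain ⟨h1, h2⟩ := T.idx_mem hx
  obtain ⟨g1, g2⟩ := T.gamma_mem (T.idx x)
  rw [T.f_apply hx]
  exact ⟨by linarith, by linarith⟩

lemma iterate_mem (T : ITM r) {x : ℝ} (hx : x ∈ unitIco) (n : ℕ) :
    (T.f)^[n] x ∈ unitIco := by
  induction n with
  | zero => exact hx
  | succ n ih => rw [Function.iterate_succ_apply']; exact T.f_mem ih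

lemma gap_lt_one (T : ITM r) (i : Fin r) :
    T.beta i.succ - T.beta i.castSucc < 1 := by
  have h2 := T.two_le_r
  have hm := T.beta_mono.monotone
  by_cases h : (i : ℕ) = 0
  · have hcs : i.castSucc = 0 := by
      ext; simpa using h
    have hlt : i.succ < Fin.last r := by
      rw [Fin.lt_iff_val_lt_val, Fin.val_succ, Fin.val_last]
      omega
    have hb := T.beta_mono hlt
    rw [T.beta_last] at hb
    rw [hcs, T.beta_zero]; linarith
  · have h0 : (0 : Fin (r + 1)) < i.castSucc := by
      rw [Fin.lt_iff_val_lt_val]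
      simpa using Nat.pos_of_ne_zero h
    have hb := T.beta_mono h0
    rw [T.beta_zero] at hb
    have h1 : T.beta i.succ ≤ 1 := by
      rw [← T.beta_last]
      exact hm (by rw [Fin.le_iff_val_le_val, Fin.val_succ, Fin.val_last]; omega)
    linarith

lemma periodic_mem_nonwandering (T : ITM r) {x : ℝ} (hx : x ∈ unitIco) {p : ℕ}
    (hp : 1 ≤ p) (hpx : (T.f)^[p] x = x) : x ∈ T.nonwandering :=
  ⟨hx, fun U _ hxU => ⟨p, hp, ⟨x, ⟨⟨x, ⟨hxU, hx⟩, hpx⟩, hxU, hx⟩⟩⟩⟩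

lemma exists_perturb (T : ITM r) {ε : ℝ} (hε : 0 < ε) :
    ∃ T₁ T₂ : ITM r, pdist T₁ T < ε ∧ pdist T₂ T < ε ∧
      (∀ x ∈ unitIco, ∃ k p : ℕ, 1 ≤ p ∧
        (T₁.f)^[p] ((T₁.f)^[k] x) = (T₁.f)^[k] x) ∧
      (∀ x ∈ unitIco, ∀ p : ℕ, 1 ≤ p → (T₂.f)^[p] x ≠ x) := by
  have hr : 0 < r := by have := T.two_le_r; omega
  have : Nonempty (Fin r) := ⟨⟨0, hr⟩⟩
  set a : Fin r → ℝ := fun i => max (-(T.beta i.castSucc)) (T.gamma i - ε / 2) with ha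
  set b : Fin r → ℝ := fun i => min (1 - T.beta i.succ) (T.gamma i + ε / 2) with hb
  have hab : ∀ i, a i < b i := by
    intro i
    obtain ⟨g1, g2⟩ := T.gamma_mem i
    have hgap := T.gap_lt_one i
    refine max_lt (lt_min (by linarith) (by linarith)) (lt_min (by linarith) (by linarith))
  set gmin : ℝ := Finset.univ.inf' Finset.univ_nonempty (fun i => b i - a i) with hgmin
  have hgpos : 0 < gmin := by
    rw [hgmin, Finset.lt_inf'_iff]
    intro i _
    linarith [hab i]
  have hgle : ∀ i, gmin ≤ b i - a i := fun i =>
    Finset.inf'_le _ (Finset.mem_univ i)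
  obtain ⟨M, hM⟩ := exists_nat_gt (3 / gmin)
  have hMpos : 0 < (M : ℝ) := lt_trans (by positivity) hM
  have hM0 : (M : ℝ) ≠ 0 := ne_of_gt hMpos
  have h3 : ∀ i, 3 / (M : ℝ) < b i - a i := by
    intro i
    have h1 : 3 / (M : ℝ) < gmin := by
      rw [div_lt_iff₀ hMpos]
      have := (div_lt_iff₀ hgpos).mp hM
      nlinarith
    linarith [hgle i]
  set k : Fin r → ℤ := fun i => ⌊a i * M⌋ + 1 with hk
  have hkfl : ∀ i, a i * M < (k i : ℝ) ∧ (k i : ℝ) ≤ a i * M + 1 := by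
    intro i
    simp only [hk]
    push_cast
    exact ⟨Int.lt_floor_add_one _, by linarith [Int.floor_le (a i * M)]⟩
  have hk1 : ∀ i, a i < (k i : ℝ) / M := by
    intro i
    rw [lt_div_iff₀ hMpos]
    exact (hkfl i).1
  have hk2 : ∀ i, ∀ c : ℝ, 0 ≤ c → c ≤ 2 → ((k i : ℝ) + c) / M < b i := by
    intro i c hc0 hc2
    rw [div_lt_iff₀ hMpos]
    have := h3 i
    have h4 : 3 < (b i - a i) * M := by
      rw [div_lt_iff₀ hMpos] at this; linarith
    linarith [(hkfl i).2]
  have hsqrt0 : (0 : ℝ) ≤ Real.sqrt 2 := Real.sqrt_nonneg 2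
  have hsqrt2 : Real.sqrt 2 ≤ 2 := by
    nlinarith [Real.sq_sqrt (by norm_num : (0:ℝ) ≤ 2)]
  set γ₁ : Fin r → ℝ := fun i => (k i : ℝ) / M with hγ₁
  set γ₂ : Fin r → ℝ := fun i => ((k i : ℝ) + Real.sqrt 2) / M with hγ₂
  have hγ₁mem : ∀ i, a i < γ₁ i ∧ γ₁ i < b i := fun i =>
    ⟨hk1 i, by simpa using hk2 i 0 le_rfl (by norm_num)⟩
  have hγ₂mem : ∀ i, a i < γ₂ i ∧ γ₂ i < b i := by
    intro i
    constructor
    · have hpos : (0 : ℝ) ≤ Real.sqrt 2 / M := by positivity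
      have heq : γ₂ i = (k i : ℝ) / M + Real.sqrt 2 / M := by
        simp only [hγ₂]; ring
      rw [heq]
      linarith [hk1 i]
    · exact hk2 i _ hsqrt0 hsqrt2
  have hmem : ∀ g : Fin r → ℝ, (∀ i, a i < g i ∧ g i < b i) →
      ∀ i : Fin r, g i ∈ Set.Icc (-(T.beta i.castSucc)) (1 - T.beta i.succ) := by
    intro g hg i
    obtain ⟨h1, h2⟩ := hg i
    exact ⟨le_of_lt (lt_of_le_of_lt (le_max_left _ _) h1),
      le_of_lt (lt_of_lt_of_le h2 (min_le_left _ _))⟩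
  set T₁ : ITM r := ⟨T.beta, γ₁, T.two_le_r, T.beta_zero, T.beta_last, T.beta_mono,
    hmem γ₁ hγ₁mem⟩ with hT₁
  set T₂ : ITM r := ⟨T.beta, γ₂, T.two_le_r, T.beta_zero, T.beta_last, T.beta_mono,
    hmem γ₂ hγ₂mem⟩ with hT₂
  have hdist : ∀ g : Fin r → ℝ, (∀ i, a i < g i ∧ g i < b i) →
      dist g T.gamma < ε := by
    intro g hg
    rw [dist_pi_lt_iff hε]
    intro i
    obtain ⟨h1, h2⟩ := hg i
    have ha1 : T.gamma i - ε / 2 ≤ a i := le_max_right _ _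
    have hb1 : b i ≤ T.gamma i + ε / 2 := min_le_right _ _
    rw [Real.dist_eq, abs_sub_lt_iff]
    constructor <;> linarith
  refine ⟨T₁, T₂, ?_, ?_, ?_, ?_⟩
  · rw [pdist]
    refine max_lt (hdist γ₁ hγ₁mem) (show dist T.beta T.beta < ε by simpa using hε)
  · rw [pdist]
    refine max_lt (hdist γ₂ hγ₂mem) (show dist T.beta T.beta < ε by simpa using hε)
  · -- T₁ : every point eventually periodic
    intro x hx
    have key : ∀ n : ℕ, ∃ m : ℤ, (T₁.f)^[n] x = x + (m : ℝ) / M := by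
      intro n
      induction n with
      | zero => exact ⟨0, by simp⟩
      | succ n ih =>
        obtain ⟨m, hm⟩ := ih
        have hy : (T₁.f)^[n] x ∈ unitIco := T₁.iterate_mem hx n
        refine ⟨m + k (T₁.idx ((T₁.f)^[n] x)), ?_⟩
        have hgam : ∀ j, T₁.gamma j = (k j : ℝ) / M := fun j => rfl
        rw [Function.iterate_succ_apply', T₁.f_apply hy, hgam, hm]
        push_cast
        ring
    set F : Finset ℝ := (Finset.Ioo (-(M : ℤ)) (M : ℤ)).image
      (fun m : ℤ => x + (m : ℝ) / M) with hF
    have hmap : ∀ n : ℕ, (T₁.f)^[n] x ∈ F := by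
      intro n
      obtain ⟨m, hm⟩ := key n
      have hmem2 := T₁.iterate_mem hx n
      rw [hm] at hmem2
      obtain ⟨h0, h1⟩ := hmem2
      obtain ⟨hx0, hx1⟩ := hx
      have hlo : -(M : ℝ) < m := by
        have hdm : (-1 : ℝ) < (m : ℝ) / M := by linarith
        have := (lt_div_iff₀ hMpos).mp hdm
        linarith
      have hhi : (m : ℝ) < M := by
        have hdm : (m : ℝ) / M < 1 := by linarith
        have := (div_lt_iff₀ hMpos).mp hdm
        linarith
      rw [hm, hF]
      refine Finset.mem_image.mpr ⟨m, Finset.mem_Ioo.mpr ⟨?_, ?_⟩, rfl⟩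
      · exact_mod_cast hlo
      · exact_mod_cast hhi
    obtain ⟨n₁, -, n₂, -, hne, heq⟩ :=
      Finset.exists_ne_map_eq_of_card_lt_of_maps_to
        (s := Finset.range (F.card + 1)) (t := F)
        (by simp) (fun n _ => hmap n)
    rcases Ne.lt_or_gt hne with hlt | hlt
    · refine ⟨n₁, n₂ - n₁, by omega, ?_⟩
      rw [← Function.iterate_add_apply, show n₂ - n₁ + n₁ = n₂ by omega]
      exact heq.symm
    · refine ⟨n₂, n₁ - n₂, by omega, ?_⟩
      rw [← Function.iterate_add_apply, show n₁ - n₂ + n₂ = n₁ by omega]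
      exact heq
  · -- T₂ : no periodic points
    intro x hx p hp hpx
    have key : ∀ n : ℕ, ∃ m : ℤ, (T₂.f)^[n] x = x + ((m : ℝ) + n * Real.sqrt 2) / M := by
      intro n
      induction n with
      | zero => exact ⟨0, by simp⟩
      | succ n ih =>
        obtain ⟨m, hm⟩ := ih
        have hy : (T₂.f)^[n] x ∈ unitIco := T₂.iterate_mem hx n
        refine ⟨m + k (T₂.idx ((T₂.f)^[n] x)), ?_⟩
        have hgam : ∀ j, T₂.gamma j = ((k j : ℝ) + Real.sqrt 2) / M := fun j => rfl
        rw [Function.iterate_succ_apply', T₂.f_apply hy, hgam, hm]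
        push_cast
        ring
      
    obtain ⟨m, hm⟩ := key p
    rw [hpx] at hm
    have hz : (m : ℝ) + p * Real.sqrt 2 = 0 := by
      have : ((m : ℝ) + p * Real.sqrt 2) / M = 0 := by linarith
      field_simp at this
      simpa using this
    have hppos : (0 : ℝ) < p := by exact_mod_cast hp
    have : Real.sqrt 2 = ((-m : ℚ) / (p : ℚ) : ℚ) := by
      push_cast
      field_simp
      linarith
    exact irrational_sqrt_two ⟨_, this.symm⟩

end ITM

/-- Arbitrarily close to every `T ∈ ITM(r)` there are maps `T₁` (every point eventually
periodic) and `T₂` (no periodic points); consequently no map in `ITM(r)` is structurally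
stable or `Ω`-stable. -/
theorem not_structurally_stable {r : ℕ} (T : ITM r) :
    (∀ ε : ℝ, 0 < ε →
      ∃ T₁ T₂ : ITM r, ITM.pdist T₁ T < ε ∧ ITM.pdist T₂ T < ε ∧
        (∀ x ∈ ITM.unitIco, ∃ k p : ℕ, 1 ≤ p ∧
          (T₁.f)^[p] ((T₁.f)^[k] x) = (T₁.f)^[k] x) ∧
        (∀ x ∈ ITM.unitIco, ∀ p : ℕ, 1 ≤ p → (T₂.f)^[p] x ≠ x)) ∧
    (¬ ∃ δ : ℝ, 0 < δ ∧ ∀ S S' : ITM r, ITM.pdist S T < δ → ITM.pdist S' T < δ →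
        ITM.TopConjOn S S' ITM.unitIco ITM.unitIco) ∧
    (¬ ∃ δ : ℝ, 0 < δ ∧ ∀ S S' : ITM r, ITM.pdist S T < δ → ITM.pdist S' T < δ →
        ITM.TopConjOn S S' S.nonwandering S'.nonwandering) := by
  have h0I : (0 : ℝ) ∈ ITM.unitIco := ⟨le_rfl, one_pos⟩
  refine ⟨fun ε hε => T.exists_perturb hε, ?_, ?_⟩
  · rintro ⟨δ, hδ, hconj⟩
    obtain ⟨T₁, T₂, h1, h2, hper, hnoper⟩ := T.exists_perturb hδ
    obtain ⟨h, g, hbij, -, -, -, hcomm⟩ := hconj T₁ T₂ h1 h2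
    obtain ⟨k, p, hp, hpx⟩ := hper 0 h0I
    set x₀ := (T₁.f)^[k] 0 with hx₀def
    have hx₀ : x₀ ∈ ITM.unitIco := T₁.iterate_mem h0I k
    have hiter : ∀ n : ℕ, h ((T₁.f)^[n] x₀) = (T₂.f)^[n] (h x₀) := by
      intro n
      induction n with
      | zero => rfl
      | succ n ih =>
        rw [Function.iterate_succ_apply', Function.iterate_succ_apply',
          hcomm _ (T₁.iterate_mem hx₀ n), ih]
    have hper2 : (T₂.f)^[p] (h x₀) = h x₀ := by
      rw [← hiter, hpx]
    exact hnoper (h x₀) (hbij.mapsTo hx₀) p hp hper2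
  · rintro ⟨δ, hδ, hconj⟩
    obtain ⟨T₁, T₂, h1, h2, hper, hnoper⟩ := T.exists_perturb hδ
    obtain ⟨h, g, hbij, -, -, -, hcomm⟩ := hconj T₁ T₂ h1 h2
    obtain ⟨k, p, hp, hpx⟩ := hper 0 h0I
    set x₀ := (T₁.f)^[k] 0 with hx₀def
    have hx₀ : x₀ ∈ ITM.unitIco := T₁.iterate_mem h0I k
    have hperiter : ∀ n : ℕ, (T₁.f)^[p] ((T₁.f)^[n] x₀) = (T₁.f)^[n] x₀ := by
      intro n
      rw [← Function.iterate_add_apply, add_comm, Function.iterate_add_apply, hpx]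
    have hΩ : ∀ n : ℕ, (T₁.f)^[n] x₀ ∈ T₁.nonwandering := fun n =>
      T₁.periodic_mem_nonwandering (T₁.iterate_mem hx₀ n) hp (hperiter n)
    have hiter : ∀ n : ℕ, h ((T₁.f)^[n] x₀) = (T₂.f)^[n] (h x₀) := by
      intro n
      induction n with
      | zero => rfl
      | succ n ih =>
        rw [Function.iterate_succ_apply', Function.iterate_succ_apply',
          hcomm _ (hΩ n), ih]
    have hper2 : (T₂.f)^[p] (h x₀) = h x₀ := by
      rw [← hiter, hpx]
    have hmem : h x₀ ∈ T₂.nonwandering := hbij.mapsTo (hΩ 0)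
    exact hnoper (h x₀) hmem.1 p hp hper2
end

section
/- For every interval translation map T ∈ ITM(r) and every point x ∈ I, at least one of the following holds: (1) x lands on a discontinuity of T; (2) x lands on a periodic point of T; (3) there exist discontinuities β, β_* ∈ 𝒞 such that the forward orbit of x accumulates on β from the left and on β_* from the right. -/
open Set Filter
open scoped Classical

section Helpers

open Set Filter

/-- From density of orbit points just below `c`, extract a strictly increasing
subsequence converging to `c` from the left. -/
private lemma exists_accum_seq (u : ℕ → ℝ) (c : ℝ)
    (h : ∀ δ : ℝ, 0 < δ → ∃ k, u k ∈ Set.Ioo (c - δ) c) :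
    ∃ n : ℕ → ℕ, StrictMono n ∧ StrictMono (fun k => u (n k)) ∧
      Filter.Tendsto (fun k => u (n k)) Filter.atTop (nhds c) := by
  have hbig : ∀ (N : ℕ) (a : ℝ), a < c → ∃ k, N < k ∧ u k ∈ Set.Ioo a c := by
    intro N a ha
    have hne : (Finset.range (N + 1)).Nonempty :=
      Finset.nonempty_range_iff.mpr (Nat.succ_ne_zero N)
    set g : ℕ → ℝ := fun j => if u j < c then max a (u j) else a with hg
    set a' : ℝ := (Finset.range (N + 1)).sup' hne g with ha'def
    have ha'lt : a' < c := by
      rw [ha'def, Finset.sup'_lt_iff]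
      intro j _
      by_cases hj : u j < c
      · simp only [hg, if_pos hj]; exact max_lt ha hj
      · simp only [hg, if_neg hj]; exact ha
    have ha'ge : a ≤ a' := by
      refine le_trans ?_ (Finset.le_sup' g (Finset.mem_range.mpr (Nat.succ_pos N)))
      by_cases hj : u 0 < c <;> simp [hg, hj]
    obtain ⟨k, hk⟩ := h (c - a') (by linarith)
    rw [sub_sub_cancel] at hk
    refine ⟨k, ?_, ⟨lt_of_le_of_lt ha'ge hk.1, hk.2⟩⟩
    by_contra hkN
    push_neg at hkN
    have hmem : k ∈ Finset.range (N + 1) := Finset.mem_range.mpr (by omega)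
    have : g k ≤ a' := Finset.le_sup' g hmem
    have hgk : g k = max a (u k) := if_pos hk.2
    have : u k ≤ a' := le_trans (le_trans (le_max_right a (u k)) (le_of_eq hgk.symm)) this
    linarith [hk.1]
  have hNpos : ∀ N : ℕ, (0:ℝ) < 1/(N+1) := fun N => by positivity
  set lb : ℕ → ℝ → ℝ := fun N a => if a < c then max a (c - 1/(N+1)) else c - 1/(N+1) with hlb
  have hlblt : ∀ N a, lb N a < c := by
    intro N a
    by_cases hac : a < c
    · simp only [hlb, if_pos hac]; exact max_lt hac (by linarith [hNpos N])
    · simp only [hlb, if_neg hac]; linarith [hNpos N]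
  have key : ∀ N a, ∃ k, N < k ∧ u k ∈ Set.Ioo (lb N a) c := fun N a => hbig N _ (hlblt N a)
  choose F hF1 hF2 using key
  set n : ℕ → ℕ := fun m => Nat.rec (F 0 (c-1)) (fun _ p => F p (u p)) m with hn
  have hnS : ∀ m, n (m+1) = F (n m) (u (n m)) := fun m => rfl
  have hmono : StrictMono n := strictMono_nat_of_lt_succ (fun m => by rw [hnS]; exact hF1 _ _)
  have hvc : ∀ m, u (n m) < c := by
    intro m
    cases m with
    | zero => exact (hF2 0 (c-1)).2
    | succ m => rw [hnS]; exact (hF2 (n m) (u (n m))).2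
  have hstep : ∀ m, u (n m) < u (n (m+1)) ∧ c - 1/(n m + 1) < u (n (m+1)) := by
    intro m
    have h2 := hF2 (n m) (u (n m))
    rw [← hnS] at h2
    have hlbeq : lb (n m) (u (n m)) = max (u (n m)) (c - 1/(n m + 1)) := if_pos (hvc m)
    constructor
    · exact lt_of_le_of_lt (le_trans (le_max_left _ _) (le_of_eq hlbeq.symm)) h2.1
    · exact lt_of_le_of_lt (le_trans (le_max_right _ _) (le_of_eq hlbeq.symm)) h2.1
  refine ⟨n, hmono, strictMono_nat_of_lt_succ (fun m => (hstep m).1), ?_⟩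
  have hbound : ∀ m : ℕ, c - 1/(m+1) ≤ u (n (m+1)) := by
    intro m
    have hle : m ≤ n m := hmono.le_apply
    have h1 : (1:ℝ)/(n m + 1) ≤ 1/(m+1) := by
      apply one_div_le_one_div_of_le
      · positivity
      · exact_mod_cast Nat.succ_le_succ hle
    linarith [(hstep m).2]
  have hlim : Filter.Tendsto (fun m : ℕ => c - 1/((m:ℝ)+1)) Filter.atTop (nhds c) := by
    have h0 : Filter.Tendsto (fun m : ℕ => 1/((m:ℝ)+1)) Filter.atTop (nhds 0) :=
      tendsto_one_div_add_atTop_nhds_zero_nat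
    have := (tendsto_const_nhds (x := c) (f := Filter.atTop (α := ℕ))).sub h0
    simpa using this
  have h2 : Filter.Tendsto (fun m : ℕ => u (n (m+1))) Filter.atTop (nhds c) :=
    tendsto_of_tendsto_of_tendsto_of_le_of_le hlim tendsto_const_nhds
      (fun m => hbound m) (fun m => le_of_lt (hvc (m+1)))
  exact (tendsto_add_atTop_iff_nat 1).mp h2

/-- Mirror version: extraction of a strictly decreasing subsequence converging
to `c` from the right. -/
private lemma exists_accum_seq' (u : ℕ → ℝ) (c : ℝ)
    (h : ∀ δ : ℝ, 0 < δ → ∃ k, u k ∈ Set.Ioo c (c + δ)) :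
    ∃ n : ℕ → ℕ, StrictMono n ∧ StrictAnti (fun k => u (n k)) ∧
      Filter.Tendsto (fun k => u (n k)) Filter.atTop (nhds c) := by
  obtain ⟨n, h1, h2, h3⟩ := exists_accum_seq (fun k => -u k) (-c) (by
    intro δ hδ
    obtain ⟨k, hk1, hk2⟩ := h δ hδ
    exact ⟨k, ⟨by show -c - δ < -u k; linarith, by show -u k < -c; linarith⟩⟩)
  refine ⟨n, h1, fun a b hab => ?_, ?_⟩
  · have := h2 hab
    simpa using this
  · have := h3.neg
    simpa using this

/-- Two orbit points within the window length force an unbounded arithmetic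
drift, contradicting boundedness of the orbit. -/
private lemma drift (f : ℝ → ℝ) (y η ε : ℝ) (hε : ε = 1 ∨ ε = -1) (hη : 0 < η)
    (hmem : ∀ j : ℕ, f^[j] y ∈ Set.Ico (0:ℝ) 1)
    (hinj : ∀ a b : ℕ, f^[a] y = f^[b] y → a = b)
    (hwin : ∀ (j : ℕ) (w : ℝ), 0 ≤ w → w < η → f^[j] (y + ε * w) = f^[j] y + ε * w) :
    False := by
  set v : ℕ → ℝ := fun j => f^[j] y with hv
  obtain ⟨c, -, φ, hφ, hconv⟩ := (isCompact_Icc (a := (0:ℝ)) (b := 1)).tendsto_subseq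
      (fun j => Set.mem_Icc.mpr ⟨(hmem j).1, le_of_lt (hmem j).2⟩)
  rw [Metric.tendsto_atTop] at hconv
  obtain ⟨N, hN⟩ := hconv (η/2) (by linarith)
  set m : ℕ := φ N with hm
  set n : ℕ := φ (N+1) with hnn
  have hmn : m < n := hφ (Nat.lt_succ_self N)
  have hdist : |v n - v m| < η := by
    have h1 := hN N le_rfl
    have h2 := hN (N+1) (Nat.le_succ N)
    rw [Real.dist_eq] at h1 h2
    calc |v n - v m| ≤ |v n - c| + |c - v m| := abs_sub_le _ _ _
      _ < η/2 + η/2 := by rw [abs_sub_comm c (v m)]; exact add_lt_add h2 h1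
      _ = η := by ring
  set σ : ℝ := v n - v m with hσdef
  have hσne : σ ≠ 0 := by
    intro h0
    have : v n = v m := by linarith [sub_eq_zero.mp h0]
    exact absurd (hinj n m this) (by omega)
  set d : ℕ := n - m with hd
  have hnd : n = m + d := by omega
  have hεε : ε * ε = 1 := by rcases hε with h | h <;> rw [h] <;> ring
  have Rel : ∀ (j : ℕ) (w : ℝ), 0 ≤ w → w < η → f^[d] (v j + ε * w) = v (j + d) + ε * w := by
    intro j w hw1 hw2
    have e1 : f^[j] (y + ε * w) = v j + ε * w := hwin j w hw1 hw2
    have e2 : f^[j + d] (y + ε * w) = v (j + d) + ε * w := hwin (j + d) w hw1 hw2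
    calc f^[d] (v j + ε * w) = f^[d] (f^[j] (y + ε * w)) := by rw [e1]
      _ = f^[d + j] (y + ε * w) := (Function.iterate_add_apply f d j _).symm
      _ = v (j + d) + ε * w := by rw [Nat.add_comm d j]; exact e2
  have hstep : ∀ a : ℕ, v (a + d) = v a + σ → v (a + d + d) = v (a + d) + σ := by
    intro a hab
    set b : ℕ := a + d with hb
    have habs : |σ| < η := hdist
    set w0 : ℝ := ε * σ with hw0
    have hsw : ε * w0 = σ := by rw [hw0, ← mul_assoc, hεε, one_mul]
    have habsw : |w0| = |σ| := by rw [hw0, abs_mul]; rcases hε with h | h <;> simp [h]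
    rcases le_or_gt 0 w0 with hpos | hneg
    · have h1 : f^[d] (v a + ε * w0) = v (a + d) + ε * w0 :=
        Rel a w0 hpos (by rw [← habsw] at habs; rwa [abs_of_nonneg hpos] at habs)
      rw [hsw, ← hab] at h1
      have h2 : f^[d] (v b + 0) = v (b + d) + 0 := by
        have := Rel b 0 le_rfl hη
        simpa using this
      simp only [add_zero] at h2
      rw [← hb] at h1
      rw [h1] at h2
      rw [hab] at h2 ⊢
      linarith [h2]
    · set w1 : ℝ := -w0 with hw1
      have hw1pos : 0 ≤ w1 := by simp [hw1]; linarith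
      have hw1lt : w1 < η := by
        rw [← habsw] at habs
        rw [abs_of_neg hneg] at habs
        simpa [hw1] using habs
      have hsw1 : ε * w1 = -σ := by rw [hw1, mul_neg, hsw]
      have h1 : f^[d] (v b + ε * w1) = v (b + d) + ε * w1 := Rel b w1 hw1pos hw1lt
      rw [hsw1] at h1
      have hvb : v b + -σ = v a := by rw [hab]; ring
      rw [hvb] at h1
      have h2 : f^[d] (v a) = v (a + d) := by
        have := Rel a 0 le_rfl hη
        simpa using this
      rw [h2] at h1
      linarith [h1]
  have hchain : ∀ k : ℕ, v (m + k * d) = v m + k * σ := by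
    intro k
    induction k with
    | zero => simp
    | succ k ih =>
      have hpred : ∀ k : ℕ, v (m + k * d + d) = v (m + k * d) + σ := by
        intro k
        induction k with
        | zero =>
          have hbase : v n = v m + σ := by rw [hσdef]; ring
          rw [hnd] at hbase
          simpa using hbase
        | succ k ih2 =>
          have := hstep (m + k * d) ih2
          have harith : m + k * d + d = m + (k+1) * d := by ring
          rw [harith] at this
          exact this
      have harith : m + (k+1) * d = m + k * d + d := by ring
      rw [harith, hpred k, ih]
      push_cast
      ring
  obtain ⟨K, hK⟩ := exists_nat_gt (2 / |σ|)
  have hKσ : (2:ℝ) < K * |σ| := by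
    have habs0 : 0 < |σ| := abs_pos.mpr hσne
    rw [div_lt_iff₀ habs0] at hK
    linarith
  have h1 := hchain K
  have h2 := hmem (m + K * d)
  have h3 := hmem m
  have : |(K:ℝ) * σ| < 2 := by
    have : (K:ℝ) * σ = v (m + K * d) - v m := by rw [h1]; ring
    rw [this, abs_sub_lt_iff]
    constructor <;> [skip; skip] <;>
      · simp only [hv] at h2 h3 ⊢
        cases h2; cases h3; linarith
  rw [abs_mul, Nat.abs_cast] at this
  linarith

namespace ITM

variable {r : ℕ} (T : ITM r)

private lemma beta_nonneg (i : Fin (r + 1)) : 0 ≤ T.beta i := by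
  rw [← T.beta_zero]; exact T.beta_mono.monotone (Fin.zero_le i)

private lemma beta_le_one (i : Fin (r + 1)) : T.beta i ≤ 1 := by
  rw [← T.beta_last]; exact T.beta_mono.monotone (Fin.le_last i)

private lemma exists_branch {y : ℝ} (hy : y ∈ unitIco) :
    ∃ i : Fin r, y ∈ Set.Ico (T.beta i.castSucc) (T.beta i.succ) := by
  classical
  set S : Finset (Fin (r + 1)) := Finset.univ.filter (fun i => T.beta i ≤ y) with hS
  have h0S : (0 : Fin (r+1)) ∈ S := by
    simp [hS, T.beta_zero, hy.1]
  have hSne : S.Nonempty := ⟨0, h0S⟩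
  set i₀ : Fin (r + 1) := S.max' hSne with hi₀
  have hi₀S : i₀ ∈ S := S.max'_mem hSne
  have hi₀le : T.beta i₀ ≤ y := by
    simp only [hS, Finset.mem_filter] at hi₀S
    exact hi₀S.2
  have hi₀lt : (i₀ : ℕ) < r := by
    by_contra hcon
    push_neg at hcon
    have : i₀ = Fin.last r := by
      apply Fin.ext
      have := i₀.isLt
      simpa [Fin.last] using by omega
    rw [this, T.beta_last] at hi₀le
    linarith [hy.2]
  refine ⟨⟨(i₀ : ℕ), hi₀lt⟩, ?_, ?_⟩
  · have : (⟨(i₀ : ℕ), hi₀lt⟩ : Fin r).castSucc = i₀ := by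
      apply Fin.ext; simp
    rw [this]; exact hi₀le
  · by_contra hcon
    push_neg at hcon
    have hmem : (⟨(i₀ : ℕ), hi₀lt⟩ : Fin r).succ ∈ S := by
      simp only [hS, Finset.mem_filter, Finset.mem_univ, true_and]
      exact hcon
    have hle := S.le_max' _ hmem
    rw [← hi₀] at hle
    have : (i₀ : ℕ) + 1 ≤ (i₀ : ℕ) := by
      have h2 := (Fin.le_def).mp hle
      simpa using h2
    omega

private lemma branch_unique {y : ℝ} {i j : Fin r}
    (hi : y ∈ Set.Ico (T.beta i.castSucc) (T.beta i.succ))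
    (hj : y ∈ Set.Ico (T.beta j.castSucc) (T.beta j.succ)) : i = j := by
  rcases lt_trichotomy i j with h | h | h
  · exfalso
    have hle : i.succ ≤ j.castSucc := by
      rw [Fin.le_def]
      simp only [Fin.val_succ, Fin.coe_castSucc]
      exact (Fin.lt_def).mp h
    have := T.beta_mono.monotone hle
    linarith [hi.2, hj.1]
  · exact h
  · exfalso
    have hle : j.succ ≤ i.castSucc := by
      rw [Fin.le_def]
      simp only [Fin.val_succ, Fin.coe_castSucc]
      exact (Fin.lt_def).mp h
    have := T.beta_mono.monotone hle
    linarith [hj.2, hi.1]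

private lemma mem_unitIco_of_branch {y : ℝ} {i : Fin r}
    (hy : y ∈ Set.Ico (T.beta i.castSucc) (T.beta i.succ)) : y ∈ unitIco :=
  ⟨le_trans (T.beta_nonneg _) hy.1, lt_of_lt_of_le hy.2 (T.beta_le_one _)⟩

private lemma f_apply_branch {y : ℝ} {i : Fin r}
    (hy : y ∈ Set.Ico (T.beta i.castSucc) (T.beta i.succ)) :
    T.f y = y + T.gamma i := by
  have hyI : y ∈ unitIco := T.mem_unitIco_of_branch hy
  have hex : ∃ j : Fin r, y ∈ Set.Ico (T.beta j.castSucc) (T.beta j.succ) := ⟨i, hy⟩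
  have hidx : T.idx y = i := by
    rw [idx, dif_pos hex]
    exact T.branch_unique hex.choose_spec hy
  rw [f, if_pos hyI, hidx]

private lemma f_mem_s16 {y : ℝ} (hy : y ∈ unitIco) : T.f y ∈ unitIco := by
  obtain ⟨i, hi⟩ := T.exists_branch hy
  rw [T.f_apply_branch hi]
  have h := T.gamma_mem i
  exact ⟨by linarith [hi.1, h.1], by linarith [hi.2, h.2]⟩

private lemma iter_mem {y : ℝ} (hy : y ∈ unitIco) (k : ℕ) : T.f^[k] y ∈ unitIco := by
  induction k with
  | zero => simpa using hy
  | succ k ih => rw [Function.iterate_succ_apply']; exact T.f_mem_s16 ih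

private lemma window_right {x η : ℝ} (hx : x ∈ unitIco) (hη : 0 < η)
    (hgap : ∀ k : ℕ, ∃ i : Fin r, T.f^[k] x ∈ Set.Ico (T.beta i.castSucc) (T.beta i.succ) ∧
      η ≤ T.beta i.succ - T.f^[k] x) :
    ∀ (j : ℕ) (w : ℝ), 0 ≤ w → w < η → T.f^[j] (x + (1:ℝ) * w) = T.f^[j] x + (1:ℝ) * w := by
  intro j
  induction j with
  | zero => intro w _ _; simp
  | succ j ih =>
    intro w hw1 hw2
    rw [Function.iterate_succ_apply', Function.iterate_succ_apply', ih w hw1 hw2]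
    obtain ⟨i, hi, hgapi⟩ := hgap j
    have h1 : T.f^[j] x + (1:ℝ) * w ∈ Set.Ico (T.beta i.castSucc) (T.beta i.succ) :=
      ⟨by have := hi.1; linarith, by have := hi.2; linarith⟩
    rw [T.f_apply_branch h1, T.f_apply_branch hi]; ring

private lemma window_left {x η : ℝ} (hx : x ∈ unitIco) (hη : 0 < η)
    (hgap : ∀ k : ℕ, ∃ i : Fin r, T.f^[k] x ∈ Set.Ico (T.beta i.castSucc) (T.beta i.succ) ∧
      η ≤ T.f^[k] x - T.beta i.castSucc) :
    ∀ (j : ℕ) (w : ℝ), 0 ≤ w → w < η → T.f^[j] (x + (-1:ℝ) * w) = T.f^[j] x + (-1:ℝ) * w := by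
  intro j
  induction j with
  | zero => intro w _ _; simp
  | succ j ih =>
    intro w hw1 hw2
    rw [Function.iterate_succ_apply', Function.iterate_succ_apply', ih w hw1 hw2]
    obtain ⟨i, hi, hgapi⟩ := hgap j
    have h1 : T.f^[j] x + (-1:ℝ) * w ∈ Set.Ico (T.beta i.castSucc) (T.beta i.succ) :=
      ⟨by have := hi.1; linarith, by have := hi.2; linarith⟩
    rw [T.f_apply_branch h1, T.f_apply_branch hi]; ring

private lemma left_accum (x : ℝ) (hx : x ∈ unitIco)
    (hinj : ∀ a b : ℕ, T.f^[a] x = T.f^[b] x → a = b) :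
    ∃ b ∈ T.critSet, T.accumFromLeft x b := by
  have hr := T.two_le_r
  haveI : Nonempty (Fin r) := ⟨⟨0, by omega⟩⟩
  by_contra hno
  push_neg at hno
  have gapδ : ∀ c : ℝ, ¬ T.accumFromLeft x c →
      ∃ δ, 0 < δ ∧ ∀ k, T.f^[k] x ∉ Set.Ioo (c - δ) c := by
    intro c hc
    by_contra hcon
    push_neg at hcon
    obtain ⟨n, h1, h2, h3⟩ := exists_accum_seq (fun k => T.f^[k] x) c hcon
    exact hc ⟨n, h1, h2, h3⟩
  have hδc : ∀ i : Fin r, i.succ ≠ Fin.last r →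
      ∃ δ, 0 < δ ∧ ∀ k, T.f^[k] x ∉ Set.Ioo (T.beta i.succ - δ) (T.beta i.succ) := by
    intro i hi
    exact gapδ _ (hno _ ⟨i.succ, Fin.succ_ne_zero i, hi, rfl⟩)
  have hstep : ∀ (i : Fin r) (k : ℕ),
      T.f^[k] x ∈ Set.Ico (T.beta i.castSucc) (T.beta i.succ) →
      T.f^[k+1] x = T.f^[k] x + T.gamma i := by
    intro i k hk
    rw [Function.iterate_succ_apply', T.f_apply_branch hk]
  have hP : ∀ i : Fin r, ∃ D, 0 < D ∧ ∀ k,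
      T.f^[k] x ∈ Set.Ico (T.beta i.castSucc) (T.beta i.succ) →
      1 - D < T.f^[k+1] x → False := by
    intro i
    by_cases hγ : T.gamma i = 0
    · refine ⟨1, one_pos, fun k hk _ => ?_⟩
      have h1 := hstep i k hk
      rw [hγ, add_zero] at h1
      have := hinj (k+1) k h1
      omega
    · by_cases hlt : T.beta i.succ + T.gamma i < 1
      · refine ⟨1 - T.beta i.succ - T.gamma i, by linarith, ?_⟩
        intro k hk hgt
        have h1 := hstep i k hk
        have h2 := hk.2
        linarith
      · have heq : T.beta i.succ + T.gamma i = 1 :=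
          le_antisymm (by linarith [(T.gamma_mem i).2]) (not_lt.mp hlt)
        have hne : i.succ ≠ Fin.last r := by
          intro h
          rw [h, T.beta_last] at heq
          exact hγ (by linarith)
        obtain ⟨δ, hδpos, hδspec⟩ := hδc i hne
        refine ⟨δ, hδpos, ?_⟩
        intro k hk hgt
        have h1 := hstep i k hk
        exact hδspec k ⟨by linarith, hk.2⟩
  choose D hD1 hD2 using hP
  have hune : (Finset.univ : Finset (Fin r)).Nonempty := Finset.univ_nonempty
  set η₀ : ℝ := Finset.univ.inf' hune D with hη₀
  have hη₀pos : 0 < η₀ := by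
    rw [hη₀, Finset.lt_inf'_iff]
    intro i _
    exact hD1 i
  have hη₀le : ∀ i : Fin r, η₀ ≤ D i := fun i =>
    Finset.inf'_le D (Finset.mem_univ i)
  have hδlast : ∃ δ, 0 < δ ∧ ∀ k, T.f^[k] x ∉ Set.Ioo (1 - δ) 1 := by
    refine ⟨min η₀ (1 - x), lt_min hη₀pos (by linarith [hx.2]), ?_⟩
    intro k hk
    match k with
    | 0 =>
      simp only [Function.iterate_zero_apply, Set.mem_Ioo] at hk
      have : min η₀ (1 - x) ≤ 1 - x := min_le_right _ _
      linarith [hk.1]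
    | Nat.succ k =>
      obtain ⟨i, hi⟩ := T.exists_branch (T.iter_mem hx k)
      refine hD2 i k hi ?_
      have h1 : 1 - min η₀ (1 - x) < T.f^[k+1] x := hk.1
      have h2 : min η₀ (1 - x) ≤ η₀ := min_le_left _ _
      have h3 := hη₀le i
      linarith
  have hδall : ∀ i : Fin r, ∃ δ, 0 < δ ∧
      ∀ k, T.f^[k] x ∉ Set.Ioo (T.beta i.succ - δ) (T.beta i.succ) := by
    intro i
    by_cases hi : i.succ = Fin.last r
    · rw [hi, T.beta_last]
      exact hδlast
    · exact hδc i hi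
  choose δg hδg1 hδg2 using hδall
  set η : ℝ := Finset.univ.inf' hune δg with hηdef
  have hηpos : 0 < η := by
    rw [hηdef, Finset.lt_inf'_iff]
    intro i _
    exact hδg1 i
  have hηle : ∀ i : Fin r, η ≤ δg i := fun i => Finset.inf'_le δg (Finset.mem_univ i)
  have hgap : ∀ k : ℕ, ∃ i : Fin r,
      T.f^[k] x ∈ Set.Ico (T.beta i.castSucc) (T.beta i.succ) ∧
      η ≤ T.beta i.succ - T.f^[k] x := by
    intro k
    obtain ⟨i, hi⟩ := T.exists_branch (T.iter_mem hx k)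
    refine ⟨i, hi, ?_⟩
    have hnot := hδg2 i k
    simp only [Set.mem_Ioo, not_and, not_lt] at hnot
    by_cases hgt : T.beta i.succ - δg i < T.f^[k] x
    · exact absurd (hnot hgt) (not_le.mpr hi.2)
    · push_neg at hgt
      linarith [hηle i]
  exact drift T.f x η 1 (Or.inl rfl) hηpos (fun j => T.iter_mem hx j)
    hinj (T.window_right hx hηpos hgap)

private lemma right_accum (x : ℝ) (hx : x ∈ unitIco)
    (hcrit : ∀ k, T.f^[k] x ∉ T.critSet)
    (hinj : ∀ a b : ℕ, T.f^[a] x = T.f^[b] x → a = b) :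
    ∃ b ∈ T.critSet, T.accumFromRight x b := by
  have hr := T.two_le_r
  haveI : Nonempty (Fin r) := ⟨⟨0, by omega⟩⟩
  by_contra hno
  push_neg at hno
  have gapδ : ∀ c : ℝ, ¬ T.accumFromRight x c →
      ∃ δ, 0 < δ ∧ ∀ k, T.f^[k] x ∉ Set.Ioo c (c + δ) := by
    intro c hc
    by_contra hcon
    push_neg at hcon
    obtain ⟨n, h1, h2, h3⟩ := exists_accum_seq' (fun k => T.f^[k] x) c hcon
    exact hc ⟨n, h1, h2, h3⟩
  have hδc : ∀ i : Fin r, i.castSucc ≠ 0 →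
      ∃ δ, 0 < δ ∧ ∀ k, T.f^[k] x ∉ Set.Ioo (T.beta i.castSucc) (T.beta i.castSucc + δ) := by
    intro i hi
    exact gapδ _ (hno _ ⟨i.castSucc, hi, (Fin.castSucc_lt_last i).ne, rfl⟩)
  have hstep : ∀ (i : Fin r) (k : ℕ),
      T.f^[k] x ∈ Set.Ico (T.beta i.castSucc) (T.beta i.succ) →
      T.f^[k+1] x = T.f^[k] x + T.gamma i := by
    intro i k hk
    rw [Function.iterate_succ_apply', T.f_apply_branch hk]
  have hQ : ∀ i : Fin r, ∃ D, 0 < D ∧ ∀ k,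
      T.f^[k] x ∈ Set.Ico (T.beta i.castSucc) (T.beta i.succ) →
      0 < T.f^[k+1] x → T.f^[k+1] x < D → False := by
    intro i
    by_cases hγ : T.gamma i = 0
    · refine ⟨1, one_pos, fun k hk _ _ => ?_⟩
      have h1 := hstep i k hk
      rw [hγ, add_zero] at h1
      have := hinj (k+1) k h1
      omega
    · by_cases hgt : 0 < T.beta i.castSucc + T.gamma i
      · refine ⟨T.beta i.castSucc + T.gamma i, hgt, ?_⟩
        intro k hk _ hlt
        have h1 := hstep i k hk
        have h2 := hk.1
        linarith
      · have heq : T.beta i.castSucc + T.gamma i = 0 :=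
          le_antisymm (not_lt.mp hgt) (by linarith [(T.gamma_mem i).1])
        have hne : i.castSucc ≠ 0 := by
          intro h
          rw [h, T.beta_zero] at heq
          exact hγ (by linarith)
        obtain ⟨δ, hδpos, hδspec⟩ := hδc i hne
        refine ⟨δ, hδpos, ?_⟩
        intro k hk hpos hlt
        have h1 := hstep i k hk
        exact hδspec k ⟨by linarith, by linarith⟩
  choose D hD1 hD2 using hQ
  have hune : (Finset.univ : Finset (Fin r)).Nonempty := Finset.univ_nonempty
  set η₀ : ℝ := Finset.univ.inf' hune D with hη₀
  have hη₀pos : 0 < η₀ := by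
    rw [hη₀, Finset.lt_inf'_iff]
    intro i _
    exact hD1 i
  have hη₀le : ∀ i : Fin r, η₀ ≤ D i := fun i =>
    Finset.inf'_le D (Finset.mem_univ i)
  -- no orbit point in a small right neighbourhood of 0
  have hδzero : ∃ δ, 0 < δ ∧ ∀ k, T.f^[k] x ∉ Set.Ioo 0 δ := by
    rcases hx.1.eq_or_lt with hx0 | hx0
    · refine ⟨η₀, hη₀pos, ?_⟩
      intro k hk
      match k with
      | 0 =>
        simp only [Function.iterate_zero_apply, ← hx0, Set.mem_Ioo] at hk
        exact lt_irrefl 0 hk.1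
      | Nat.succ k =>
        obtain ⟨i, hi⟩ := T.exists_branch (T.iter_mem hx k)
        exact hD2 i k hi hk.1 (lt_of_lt_of_le hk.2 (hη₀le i))
    · refine ⟨min η₀ x, lt_min hη₀pos hx0, ?_⟩
      intro k hk
      match k with
      | 0 =>
        simp only [Function.iterate_zero_apply, Set.mem_Ioo] at hk
        have := min_le_right η₀ x
        linarith [hk.2]
      | Nat.succ k =>
        obtain ⟨i, hi⟩ := T.exists_branch (T.iter_mem hx k)
        exact hD2 i k hi hk.1 (lt_of_lt_of_le hk.2 (le_trans (min_le_left _ _) (hη₀le i)))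
  obtain ⟨δ₀, hδ₀pos, hδ₀spec⟩ := hδzero
  have hE : ∀ i : Fin r, ∃ E, 0 < E ∧ ∀ k,
      T.f^[k] x ∈ Set.Ico (T.beta i.castSucc) (T.beta i.succ) →
      T.f^[k] x ≠ T.beta i.castSucc → E ≤ T.f^[k] x - T.beta i.castSucc := by
    intro i
    by_cases hi : i.castSucc = 0
    · refine ⟨δ₀, hδ₀pos, ?_⟩
      intro k hk hne
      have hb0 : T.beta i.castSucc = 0 := by rw [hi, T.beta_zero]
      have h1 : 0 < T.f^[k] x := lt_of_le_of_ne (hb0 ▸ hk.1) (hb0 ▸ (Ne.symm hne))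
      have h2 := hδ₀spec k
      simp only [Set.mem_Ioo, not_and, not_lt] at h2
      have := h2 h1
      linarith
    · obtain ⟨δ, hδpos, hδspec⟩ := hδc i hi
      refine ⟨δ, hδpos, ?_⟩
      intro k hk hne
      have h1 : T.beta i.castSucc < T.f^[k] x := lt_of_le_of_ne hk.1 (Ne.symm hne)
      have h2 := hδspec k
      simp only [Set.mem_Ioo, not_and, not_lt] at h2
      have := h2 h1
      linarith
  choose E hE1 hE2 using hE
  set η : ℝ := Finset.univ.inf' hune E with hηdef
  have hηpos : 0 < η := by
    rw [hηdef, Finset.lt_inf'_iff]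
    intro i _
    exact hE1 i
  have hηle : ∀ i : Fin r, η ≤ E i := fun i => Finset.inf'_le E (Finset.mem_univ i)
  -- shift past the (at most one) orbit point equal to 0
  have hK : ∃ K : ℕ, ∀ j : ℕ, T.f^[j + K] x ≠ 0 := by
    by_cases hzx : ∃ k0, T.f^[k0] x = 0
    · obtain ⟨k0, hk0⟩ := hzx
      refine ⟨k0 + 1, fun j h => ?_⟩
      have := hinj (j + (k0 + 1)) k0 (h.trans hk0.symm)
      omega
    · push_neg at hzx
      exact ⟨0, fun j => hzx (j + 0)⟩
  obtain ⟨K, hKspec⟩ := hK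
  set y : ℝ := T.f^[K] x with hy
  have hyI : y ∈ unitIco := T.iter_mem hx K
  have hyj : ∀ j : ℕ, T.f^[j] y = T.f^[j + K] x := by
    intro j
    rw [hy, ← Function.iterate_add_apply]
  have hyinj : ∀ a b : ℕ, T.f^[a] y = T.f^[b] y → a = b := by
    intro a b hab
    rw [hyj, hyj] at hab
    have := hinj (a + K) (b + K) hab
    omega
  have hgap : ∀ j : ℕ, ∃ i : Fin r,
      T.f^[j] y ∈ Set.Ico (T.beta i.castSucc) (T.beta i.succ) ∧
      η ≤ T.f^[j] y - T.beta i.castSucc := by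
    intro j
    obtain ⟨i, hi⟩ := T.exists_branch (T.iter_mem hyI j)
    refine ⟨i, hi, ?_⟩
    have hne : T.f^[j] y ≠ T.beta i.castSucc := by
      by_cases hi0 : i.castSucc = 0
      · rw [hi0, T.beta_zero, hyj]
        exact hKspec j
      · intro h
        refine hcrit (j + K) ?_
        rw [← hyj, h]
        exact ⟨i.castSucc, hi0, (Fin.castSucc_lt_last i).ne, rfl⟩
    have hmem' : T.f^[j + K] x ∈ Set.Ico (T.beta i.castSucc) (T.beta i.succ) := by
      rw [← hyj]; exact hi
    have hne' : T.f^[j + K] x ≠ T.beta i.castSucc := by rw [← hyj]; exact hne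
    have := hE2 i (j + K) hmem' hne'
    rw [← hyj] at this
    linarith [hηle i]
  exact drift T.f y η (-1) (Or.inr rfl) hηpos (fun j => T.iter_mem hyI j)
    hyinj (T.window_left hyI hηpos hgap)

end ITM

end Helpers

/-- **Orbit Classification.** Every point `x ∈ I` either lands on a discontinuity, or
lands on a periodic point, or its orbit accumulates on a discontinuity from the left and
on a discontinuity from the right. -/
theorem orbit_classification {r : ℕ} (T : ITM r) (x : ℝ) (hx : x ∈ ITM.unitIco) :
    (∃ k : ℕ, (T.f)^[k] x ∈ T.critSet) ∨
    (∃ k p : ℕ, 1 ≤ p ∧ (T.f)^[p] ((T.f)^[k] x) = (T.f)^[k] x) ∨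
    (∃ b ∈ T.critSet, ∃ b' ∈ T.critSet, T.accumFromLeft x b ∧ T.accumFromRight x b') := by
  by_cases h1 : ∃ k : ℕ, (T.f)^[k] x ∈ T.critSet
  · exact Or.inl h1
  by_cases h2 : ∃ k p : ℕ, 1 ≤ p ∧ (T.f)^[p] ((T.f)^[k] x) = (T.f)^[k] x
  · exact Or.inr (Or.inl h2)
  push_neg at h1 h2
  have hinj : ∀ a b : ℕ, T.f^[a] x = T.f^[b] x → a = b := by
    intro a b hab
    rcases lt_trichotomy a b with h | h | h
    · exfalso
      refine h2 a (b - a) (by omega) ?_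
      rw [← Function.iterate_add_apply]
      have : b - a + a = b := by omega
      rw [this, hab]
    · exact h
    · exfalso
      refine h2 b (a - b) (by omega) ?_
      rw [← Function.iterate_add_apply]
      have : a - b + b = a := by omega
      rw [this, ← hab]
  obtain ⟨b, hb, hbl⟩ := T.left_accum x hx hinj
  obtain ⟨b', hb', hbr⟩ := T.right_accum x hx h1 hinj
  exact Or.inr (Or.inr ⟨b, hb, b', hb', hbl, hbr⟩)
end
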